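/- arXiv:1407.1289 — 2 statements merged into one kernel-verified Lean document; each statement's English description precedes it below -/
import Mathlib

section
/- Let K = B^T B for a matrix B, and let K̃ be a symmetric PSD matrix satisfying c·x^T K x ≤ x^T K̃ x ≤ x^T K x for all x in the row span of K, where 0 < c ≤ 1. Then for every row b_i of B in the row span of K, the true leverage score τ_i = b_i^T K^+ b_i and the approximate score τ̃_i = b_i^T K̃^+ b_i satisfy τ_i ≤ τ̃_i ≤ (1/c)·τ_i. -/
open Matrix

def IsMoorePenrose {n : Type*} [Fintype n] (K Kp : Matrix n n ℝ) : Prop :=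
  K * Kp * K = K ∧ Kp * K * Kp = Kp ∧ (K * Kp)ᵀ = K * Kp ∧ (Kp * K)ᵀ = Kp * K

/-!
For symmetric PSD `A` and `b` in its range, `b ⬝ A⁺ b = max_x (2 b ⬝ x - x ⬝ A x)`, attained at
`x = A⁺ b`. So this energy can only grow when `A` is decreased in the Loewner order at the
maximiser. Both bounds follow by comparing `K` with `K̃`, and `K̃` with `c K`, at the vectors
`K⁺ b` and `K̃⁺ b`; these lie in the range of `K`, which equals that of `K̃` because the kernels
agree and the range of a symmetric matrix is the orthogonal complement of its kernel.
-/

namespace IsMoorePenrose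

variable {n : Type*} [Fintype n] {A Q : Matrix n n ℝ}

theorem mulVec_mulVec_of_mem_range (hQ : IsMoorePenrose A Q) {b : n → ℝ}
    (hb : b ∈ Set.range A.mulVec) : A *ᵥ Q *ᵥ b = b := by
  obtain ⟨y, rfl⟩ := hb
  rw [mulVec_mulVec, mulVec_mulVec, hQ.1]

theorem mulVec_mem_range (hA : A.IsSymm) (hQ : IsMoorePenrose A Q) (b : n → ℝ) :
    Q *ᵥ b ∈ Set.range A.mulVec := by
  have hQA : Q * A = A * Qᵀ := by
    rw [← hQ.2.2.2, transpose_mul, hA.eq]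
  refine ⟨Qᵀ *ᵥ Q *ᵥ b, ?_⟩
  rw [mulVec_mulVec, mulVec_mulVec, ← hQA, hQ.2.1]

theorem mem_range_iff_forall_dotProduct_eq_zero (hA : A.IsSymm) (hQ : IsMoorePenrose A Q)
    (b : n → ℝ) : b ∈ Set.range A.mulVec ↔ ∀ r, A *ᵥ r = 0 → b ⬝ᵥ r = 0 := by
  constructor
  · rintro ⟨y, rfl⟩ r hr
    rw [dotProduct_comm, dotProduct_mulVec, ← mulVec_transpose, hA.eq, hr, zero_dotProduct]
  · intro hb
    -- `r - Q A r` lies in the kernel of `A`, so `b` and `(Q A) b` have the same inner products.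
    have hQAb : Q *ᵥ A *ᵥ b = b := by
      refine dotProduct_eq _ _ fun r => ?_
      have hker : A *ᵥ (r - Q *ᵥ A *ᵥ r) = 0 := by
        rw [mulVec_sub, mulVec_mulVec, mulVec_mulVec, hQ.1, sub_self]
      have := hb _ hker
      rw [dotProduct_sub, sub_eq_zero, mulVec_mulVec, dotProduct_mulVec, ← mulVec_transpose,
        hQ.2.2.2] at this
      rw [mulVec_mulVec, this]
    rw [← hQAb]
    exact hQ.mulVec_mem_range hA _

end IsMoorePenrose

section Energy

variable {n : Type*} [Fintype n]

theorem Matrix.PosSemidef.two_mul_dotProduct_sub_le {A : Matrix n n ℝ} (hA : A.PosSemidef)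
    {b u : n → ℝ} (hu : A *ᵥ u = b) (x : n → ℝ) :
    2 * (b ⬝ᵥ x) - x ⬝ᵥ A *ᵥ x ≤ b ⬝ᵥ u := by
  have hsymm : A.IsSymm := isHermitian_iff_isSymm.mp hA.isHermitian
  have hnonneg : 0 ≤ (x - u) ⬝ᵥ A *ᵥ (x - u) := by
    simpa using hA.dotProduct_mulVec_nonneg (x - u)
  have hux : u ⬝ᵥ A *ᵥ x = b ⬝ᵥ x := by
    rw [dotProduct_mulVec, ← mulVec_transpose, hsymm.eq, hu]
  rw [mulVec_sub, sub_dotProduct, dotProduct_sub, dotProduct_sub, hux, hu,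
    dotProduct_comm x b, dotProduct_comm u b] at hnonneg
  linarith

theorem dotProduct_le_of_quadForm_le {A A' : Matrix n n ℝ} (hA : A.IsSymm)
    (hA' : A'.PosSemidef) {b u v : n → ℝ} (hu : A *ᵥ u = b) (hv : A' *ᵥ v = b)
    (h : u ⬝ᵥ A' *ᵥ u ≤ u ⬝ᵥ A *ᵥ u) : b ⬝ᵥ u ≤ b ⬝ᵥ v := by
  have huu : u ⬝ᵥ A *ᵥ u = b ⬝ᵥ u := by
    rw [dotProduct_mulVec, ← mulVec_transpose, hA.eq, hu]
  linarith [hA'.two_mul_dotProduct_sub_le hv u]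

end Energy

theorem approx_leverage_scores_general {m n : ℕ}
    (B : Matrix (Fin m) (Fin n) ℝ)
    (K Kt : Matrix (Fin n) (Fin n) ℝ) (hK : K = Bᵀ * B)
    (hKt : Kt.PosSemidef)
    (hker : ∀ x : Fin n → ℝ, K.mulVec x = 0 ↔ Kt.mulVec x = 0)
    (c : ℝ) (hc0 : 0 < c)
    (happrox : ∀ x : Fin n → ℝ, (∃ y, x = K.mulVec y) →
      c * (x ⬝ᵥ K.mulVec x) ≤ x ⬝ᵥ Kt.mulVec x ∧ x ⬝ᵥ Kt.mulVec x ≤ x ⬝ᵥ K.mulVec x)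
    (Kp Ktp : Matrix (Fin n) (Fin n) ℝ)
    (hKp : IsMoorePenrose K Kp) (hKtp : IsMoorePenrose Kt Ktp)
    (i : Fin m) (hrow : ∃ y, B i = K.mulVec y) :
    B i ⬝ᵥ Kp.mulVec (B i) ≤ B i ⬝ᵥ Ktp.mulVec (B i) ∧
      B i ⬝ᵥ Ktp.mulVec (B i) ≤ (1 / c) * (B i ⬝ᵥ Kp.mulVec (B i)) := by
  have hKpsd : K.PosSemidef := by
    simpa [hK] using posSemidef_conjTranspose_mul_self B
  have hKsymm : K.IsSymm := isHermitian_iff_isSymm.mp hKpsd.isHermitian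
  have hKtsymm : Kt.IsSymm := isHermitian_iff_isSymm.mp hKt.isHermitian
  have hrange : Set.range K.mulVec = Set.range Kt.mulVec := by
    ext b
    simp only [hKp.mem_range_iff_forall_dotProduct_eq_zero hKsymm,
      hKtp.mem_range_iff_forall_dotProduct_eq_zero hKtsymm, hker]
  have happrox' : ∀ x ∈ Set.range K.mulVec, _ := fun x ⟨y, hy⟩ => happrox x ⟨y, hy.symm⟩
  have hb : B i ∈ Set.range K.mulVec := hrow.imp fun _ => Eq.symm
  have hKKp := hKp.mulVec_mulVec_of_mem_range hb
  have hKtKtp := hKtp.mulVec_mulVec_of_mem_range (hrange ▸ hb)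
  refine ⟨dotProduct_le_of_quadForm_le hKsymm hKt hKKp hKtKtp
    (happrox' _ (hKp.mulVec_mem_range hKsymm _)).2, ?_⟩
  have hscaled : (c • K) *ᵥ (c⁻¹ • Kp *ᵥ B i) = B i := by
    rw [smul_mulVec, mulVec_smul, hKKp, smul_smul, mul_inv_cancel₀ hc0.ne', one_smul]
  have hupper := dotProduct_le_of_quadForm_le hKtsymm (hKpsd.smul hc0.le) hKtKtp hscaled
    (by simpa only [smul_mulVec, dotProduct_smul, smul_eq_mul] using
      (happrox' _ (hrange ▸ hKtp.mulVec_mem_range hKtsymm _)).1)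
  rwa [dotProduct_smul, smul_eq_mul, ← one_div] at hupper

theorem approx_leverage_scores {m n : ℕ}
    (B : Matrix (Fin m) (Fin n) ℝ)
    (K Kt : Matrix (Fin n) (Fin n) ℝ) (hK : K = Bᵀ * B)
    (hKt : Kt.PosSemidef)
    (hker : ∀ x : Fin n → ℝ, K.mulVec x = 0 ↔ Kt.mulVec x = 0)
    (c : ℝ) (hc0 : 0 < c) (hc1 : c ≤ 1)
    (happrox : ∀ x : Fin n → ℝ, (∃ y, x = K.mulVec y) →
      c * (x ⬝ᵥ K.mulVec x) ≤ x ⬝ᵥ Kt.mulVec x ∧ x ⬝ᵥ Kt.mulVec x ≤ x ⬝ᵥ K.mulVec x)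
    (Kp Ktp : Matrix (Fin n) (Fin n) ℝ)
    (hKp : IsMoorePenrose K Kp) (hKtp : IsMoorePenrose Kt Ktp)
    (i : Fin m) (hrow : ∃ y, B i = K.mulVec y) :
    B i ⬝ᵥ Kp.mulVec (B i) ≤ B i ⬝ᵥ Ktp.mulVec (B i) ∧
      B i ⬝ᵥ Ktp.mulVec (B i) ≤ (1 / c) * (B i ⬝ᵥ Kp.mulVec (B i)) :=
  approx_leverage_scores_general B K Kt hK hKt hker c hc0 happrox Kp Ktp hKp hKtp i hrow
end

section
/- Let B ∈ ℝ^{m×n}, K = B^T B, and let K̃ be symmetric PSD with the same row span as K satisfying c·K ⪯_r K̃ ⪯_r K for 0 < c ≤ 1 (inequalities on the row span). For a row b_e of B, let x_e = B K̃^+ b_e. Then ‖x_e‖₂² ≤ (1/c)·b_e^T K̃^+ b_e. -/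
/-!
Symmetric matrices with the same kernel have the same range, so `b := B e ∈ range K = range K̃`.
Hence `v := K̃⁺ b` satisfies `K̃ v = b`, and `v ∈ range K̃⁺ ⊆ range K̃ᵀ = range K`. Then
`‖x_e‖² = ‖B v‖² = vᵀ K v ≤ c⁻¹ · vᵀ K̃ v = c⁻¹ · bᵀ v` by the lower approximation bound at `v`.
-/

open Matrix

theorem LinearMap.IsSymmetric.range_le_range_of_ker_le {𝕜 E : Type*} [RCLike 𝕜]
    [NormedAddCommGroup E] [InnerProductSpace 𝕜 E] [FiniteDimensional 𝕜 E]
    {S T : E →ₗ[𝕜] E} (hS : S.IsSymmetric) (hT : T.IsSymmetric) (h : ker T ≤ ker S) :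
    range S ≤ range T := by
  calc range S ≤ (range S)ᗮᗮ := Submodule.le_orthogonal_orthogonal _
    _ = (ker S)ᗮ := by rw [hS.orthogonal_range]
    _ ≤ (ker T)ᗮ := Submodule.orthogonal_le h
    _ = range T := by rw [← hT.orthogonal_range, Submodule.orthogonal_orthogonal]

theorem Matrix.IsHermitian.exists_mulVec_eq_of_ker_le {𝕜 n : Type*} [RCLike 𝕜] [Fintype n]
    [DecidableEq n] {A C : Matrix n n 𝕜} (hA : A.IsHermitian) (hC : C.IsHermitian)
    (h : ∀ x, C *ᵥ x = 0 → A *ᵥ x = 0) (y : n → 𝕜) : ∃ z, A *ᵥ y = C *ᵥ z := by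
  have hle := (isSymmetric_toEuclideanLin_iff.mpr hA).range_le_range_of_ker_le
    (isSymmetric_toEuclideanLin_iff.mpr hC) fun x hx =>
      WithLp.ofLp_injective 2 (h x.ofLp (congrArg WithLp.ofLp (LinearMap.mem_ker.mp hx)))
  obtain ⟨z, hz⟩ := hle (LinearMap.mem_range_self _ (WithLp.toLp 2 y))
  exact ⟨z.ofLp, by simpa using (congrArg WithLp.ofLp hz).symm⟩

namespace IsMoorePenrose

variable {n : Type*} [Fintype n] {K Kp : Matrix n n ℝ}

theorem mulVec_mulVec_mulVec (hP : IsMoorePenrose K Kp) (z : n → ℝ) :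
    K *ᵥ (Kp *ᵥ (K *ᵥ z)) = K *ᵥ z := by
  rw [mulVec_mulVec, mulVec_mulVec, hP.1]

theorem exists_mulVec_eq_transpose_mulVec (hP : IsMoorePenrose K Kp) (x : n → ℝ) :
    ∃ w, Kp *ᵥ x = Kᵀ *ᵥ w := by
  refine ⟨Kpᵀ *ᵥ (Kp *ᵥ x), ?_⟩
  rw [mulVec_mulVec, ← transpose_mul, hP.2.2.2, mulVec_mulVec, hP.2.1]

end IsMoorePenrose

theorem dotProduct_self_mulVec {m n : Type*} [Fintype m] [Fintype n]
    (B : Matrix m n ℝ) (v : n → ℝ) : (B *ᵥ v) ⬝ᵥ (B *ᵥ v) = v ⬝ᵥ (Bᵀ * B) *ᵥ v := by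
  rw [← mulVec_mulVec, mulVec_transpose, dotProduct_mulVec, dotProduct_comm]

theorem x_e_norm_bound_general {m n : ℕ}
    (B : Matrix (Fin m) (Fin n) ℝ)
    (K Kt : Matrix (Fin n) (Fin n) ℝ) (hK : K = Bᵀ * B)
    (hKt : Kt.PosSemidef)
    (hker : ∀ x : Fin n → ℝ, K.mulVec x = 0 ↔ Kt.mulVec x = 0)
    (c : ℝ) (hc0 : 0 < c)
    (happrox : ∀ x : Fin n → ℝ, (∃ y, x = K.mulVec y) →
      c * (x ⬝ᵥ K.mulVec x) ≤ x ⬝ᵥ Kt.mulVec x ∧ x ⬝ᵥ Kt.mulVec x ≤ x ⬝ᵥ K.mulVec x)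
    (Ktp : Matrix (Fin n) (Fin n) ℝ) (hKtp : IsMoorePenrose Kt Ktp)
    (e : Fin m) (hrow : ∃ y, B e = K.mulVec y)
    (xe : Fin m → ℝ) (hxe : xe = B.mulVec (Ktp.mulVec (B e))) :
    xe ⬝ᵥ xe ≤ (1 / c) * (B e ⬝ᵥ Ktp.mulVec (B e)) := by
  have hKherm : K.IsHermitian := hK ▸ isHermitian_conjTranspose_mul_self B
  have hKtsymm : Ktᵀ = Kt := hKt.1
  obtain ⟨y, hy⟩ := hrow
  obtain ⟨z, hz⟩ := hKherm.exists_mulVec_eq_of_ker_le hKt.1 (fun x => (hker x).2) y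
  have hKtv : Kt *ᵥ (Ktp *ᵥ B e) = B e := by rw [hy, hz, hKtp.mulVec_mulVec_mulVec]
  obtain ⟨w, hw⟩ := hKtp.exists_mulVec_eq_transpose_mulVec (B e)
  rw [hKtsymm] at hw
  obtain ⟨u, hu⟩ := hKt.1.exists_mulVec_eq_of_ker_le hKherm (fun x => (hker x).1) w
  have hcv := (happrox (Ktp *ᵥ B e) ⟨u, hw.trans hu⟩).1
  rw [hKtv, dotProduct_comm _ (B e)] at hcv
  rw [hxe, dotProduct_self_mulVec, ← hK, one_div, ← div_eq_inv_mul, le_div_iff₀' hc0]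
  exact hcv

theorem x_e_norm_bound {m n : ℕ}
    (B : Matrix (Fin m) (Fin n) ℝ)
    (K Kt : Matrix (Fin n) (Fin n) ℝ) (hK : K = Bᵀ * B)
    (hKt : Kt.PosSemidef)
    (hker : ∀ x : Fin n → ℝ, K.mulVec x = 0 ↔ Kt.mulVec x = 0)
    (c : ℝ) (hc0 : 0 < c) (hc1 : c ≤ 1)
    (happrox : ∀ x : Fin n → ℝ, (∃ y, x = K.mulVec y) →
      c * (x ⬝ᵥ K.mulVec x) ≤ x ⬝ᵥ Kt.mulVec x ∧ x ⬝ᵥ Kt.mulVec x ≤ x ⬝ᵥ K.mulVec x)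
    (Ktp : Matrix (Fin n) (Fin n) ℝ) (hKtp : IsMoorePenrose Kt Ktp)
    (e : Fin m) (hrow : ∃ y, B e = K.mulVec y)
    (xe : Fin m → ℝ) (hxe : xe = B.mulVec (Ktp.mulVec (B e))) :
    xe ⬝ᵥ xe ≤ (1 / c) * (B e ⬝ᵥ Ktp.mulVec (B e)) :=
  x_e_norm_bound_general B K Kt hK hKt hker c hc0 happrox Ktp hKtp e hrow xe hxe
end
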